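/- arXiv:2405.00500 — 3 statements merged into one kernel-verified Lean document; each statement's English description precedes it below -/
import Mathlib

section
/- Let a, b, c, d be integers with 1 = a ≤ b ≤ c ≤ d, and let M be the 4×4 integer matrix with diagonal entries a, b, c, d and all off-diagonal entries equal to −1. If det M = 0, then b ≤ 5. Moreover: if b = 3 and c ≥ 7, then c = d = 7; if b = 4, then c = 4 and d = 9; and if b = 5, then c = d = 5. -/
/-! Multiplying the determinant equation (with `a = 1`) by `b - 1` turns it into
`X * Y = (2 (b + 1))²` with `X = (b - 1) c - (b + 3) ≤ Y = (b - 1) d - (b + 3)`.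
Hence `X ≤ 2 (b + 1)`, while `c ≥ b` gives `X ≥ (b - 3)(b + 1)`, so `b ≤ 5`; for each
`b ∈ {3, 4, 5}` the same bound leaves only the listed solutions. -/

theorem det_of_offDiag_eq_neg_one {R : Type*} [CommRing R] (a b c d : R) :
    (!![a, -1, -1, -1;
        -1, b, -1, -1;
        -1, -1, c, -1;
        -1, -1, -1, d]).det =
      a * b * c * d - a * b - a * c - a * d - b * c - b * d - c * d
        - 2 * a - 2 * b - 2 * c - 2 * d - 3 := by
  simp [Matrix.det_succ_row_zero, Fin.sum_univ_succ, Fin.succAbove]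
  ring

theorem mul_eq_sq_of_det_eq_zero {R : Type*} [CommRing R] (b c d : R)
    (h : (!![1, -1, -1, -1;
             -1, b, -1, -1;
             -1, -1, c, -1;
             -1, -1, -1, d]).det = 0) :
    ((b - 1) * c - (b + 3)) * ((b - 1) * d - (b + 3)) = (2 * (b + 1)) ^ 2 := by
  rw [det_of_offDiag_eq_neg_one] at h
  linear_combination (b - 1) * h

section OrderedRing

variable {R : Type*} [Ring R] [LinearOrder R] [IsStrictOrderedRing R] {x y m : R}

theorem le_of_mul_eq_sq (hx : 0 ≤ x) (hm : 0 ≤ m) (hxy : x ≤ y) (h : x * y = m ^ 2) :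
    x ≤ m :=
  (pow_le_pow_iff_left₀ hx hm two_ne_zero).1 (h ▸ sq x ▸ mul_le_mul_of_nonneg_left hxy hx)

theorem eq_of_mul_eq_sq (hm : 0 < m) (hmx : m ≤ x) (hxy : x ≤ y) (h : x * y = m ^ 2) :
    x = m ∧ y = m := by
  have hx : x = m := le_antisymm (le_of_mul_eq_sq (hm.le.trans hmx) hm.le hxy h) hmx
  subst hx
  exact ⟨rfl, mul_left_cancel₀ hm.ne' (h.trans (sq x))⟩

end OrderedRing

theorem stmt_10_general (a b c d : ℤ) (ha : a = 1) (hbc : b ≤ c) (hcd : c ≤ d)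
    (hdet : (!![a, -1, -1, -1;
                -1, b, -1, -1;
                -1, -1, c, -1;
                -1, -1, -1, d]).det = 0) :
    b ≤ 5 ∧
    (b = 3 → 7 ≤ c → c = 7 ∧ d = 7) ∧
    (b = 4 → c = 4 ∧ d = 9) ∧
    (b = 5 → c = 5 ∧ d = 5) := by
  subst ha
  have key := mul_eq_sq_of_det_eq_zero b c d hdet
  refine ⟨?_, ?_, ?_, ?_⟩
  · by_contra! hb
    have hbc_mul : (b - 1) * b ≤ (b - 1) * c := mul_le_mul_of_nonneg_left hbc (by omega)
    have hcd_mul : (b - 1) * c ≤ (b - 1) * d := mul_le_mul_of_nonneg_left hcd (by omega)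
    have hx := le_of_mul_eq_sq (by nlinarith) (by omega) (by omega) key
    nlinarith
  · rintro rfl hc
    have hx := eq_of_mul_eq_sq (by norm_num) (by omega) (by omega)
      (key.trans (by norm_num : _ = (8 : ℤ) ^ 2))
    omega
  · rintro rfl
    have hx := le_of_mul_eq_sq (by omega) (by norm_num) (by omega)
      (key.trans (by norm_num : _ = (10 : ℤ) ^ 2))
    obtain rfl | rfl : c = 4 ∨ c = 5 := by omega
    all_goals omega
  · rintro rfl
    have hx := eq_of_mul_eq_sq (by norm_num) (by omega) (by omega)
      (key.trans (by norm_num : _ = (12 : ℤ) ^ 2))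
    omega

theorem stmt_10 (a b c d : ℤ) (ha : a = 1) (hab : a ≤ b) (hbc : b ≤ c) (hcd : c ≤ d)
    (hdet : (!![a, -1, -1, -1;
                -1, b, -1, -1;
                -1, -1, c, -1;
                -1, -1, -1, d]).det = 0) :
    b ≤ 5 ∧
    (b = 3 → 7 ≤ c → c = 7 ∧ d = 7) ∧
    (b = 4 → c = 4 ∧ d = 9) ∧
    (b = 5 → c = 5 ∧ d = 5) :=
  stmt_10_general a b c d ha hbc hcd hdet
end

section
/- Let S = {v_1,…,v_n} ⊂ ℤ^n be a non-acute subset with Wu element W = Σ_{i=1}^n v_i. Then for all integers x_1,…,x_n, setting x = Σ_{i=1}^n x_i v_i, one has ⟨x, W − x⟩ ≤ 0. -/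
/-!
Write `x = Σ xᵢ vᵢ` and `W - x = Σ (1 - xⱼ) vⱼ`, so that `⟨x, W - x⟩ = Σᵢⱼ xᵢ (1 - xⱼ) Aᵢⱼ` for the
Gram matrix `A`. Since `A` is symmetric, this sum equals
`Σᵢ xᵢ (1 - xᵢ) rᵢ + ½ Σᵢⱼ (xᵢ - xⱼ)² Aᵢⱼ`, where `rᵢ` are the row sums. Non-acuteness gives
`rᵢ ≥ 0` and `Aᵢⱼ ≤ 0` for `i ≠ j`, and `x (1 - x) ≤ 0` for every integer `x`.
-/

open Finset

/-- The standard dot product on `ℤ^n`. -/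
def dotZ {n : ℕ} (v w : Fin n → ℤ) : ℤ := ∑ i, v i * w i

/-- A family `v_1, …, v_n` of vectors in `ℤ^n` is non-acute. -/
def NonAcute {n : ℕ} (v : Fin n → Fin n → ℤ) : Prop :=
  (∀ i, 1 ≤ dotZ (v i) (v i)) ∧
  (∀ i j, i ≠ j → dotZ (v i) (v j) ≤ 0) ∧
  (∀ i, -(∑ j ∈ univ.erase i, dotZ (v j) (v i)) ≤ dotZ (v i) (v i))

open Matrix

lemma Int.mul_one_sub_self_nonpos (x : ℤ) : x * (1 - x) ≤ 0 := by
  rcases le_or_gt x 0 with h | h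
  · exact mul_nonpos_of_nonpos_of_nonneg h (by omega)
  · exact mul_nonpos_of_nonneg_of_nonpos h.le (by omega)

section SymmetricForm

variable {ι : Type*} [Fintype ι] (A : ι → ι → ℤ) (x : ι → ℤ)

lemma two_mul_sum_mul_one_sub_eq (hA : ∀ i j, A i j = A j i) :
    2 * ∑ i, ∑ j, x i * (1 - x j) * A i j =
      2 * ∑ i, x i * (1 - x i) * ∑ j, A i j + ∑ i, ∑ j, (x i - x j) ^ 2 * A i j := by
  have hswap : ∑ i, ∑ j, x j ^ 2 * A i j = ∑ i, ∑ j, x i ^ 2 * A i j := by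
    rw [sum_comm]
    exact sum_congr rfl fun i _ => sum_congr rfl fun j _ => by rw [hA]
  rw [← sub_eq_zero, ← sub_eq_zero.mpr hswap.symm]
  simp only [mul_sum, ← sum_add_distrib, ← sum_sub_distrib]
  exact sum_congr rfl fun i _ => sum_congr rfl fun j _ => by ring

lemma sum_mul_one_sub_nonpos (hA : ∀ i j, A i j = A j i) (hoff : ∀ i j, i ≠ j → A i j ≤ 0)
    (hrow : ∀ i, 0 ≤ ∑ j, A i j) :
    ∑ i, ∑ j, x i * (1 - x j) * A i j ≤ 0 := by
  have hdiag : ∑ i, x i * (1 - x i) * ∑ j, A i j ≤ 0 :=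
    sum_nonpos fun i _ =>
      mul_nonpos_of_nonpos_of_nonneg (Int.mul_one_sub_self_nonpos _) (hrow i)
  have hspread : ∑ i, ∑ j, (x i - x j) ^ 2 * A i j ≤ 0 := by
    refine sum_nonpos fun i _ => sum_nonpos fun j _ => ?_
    rcases eq_or_ne i j with rfl | hij
    · simp
    · exact mul_nonpos_of_nonneg_of_nonpos (sq_nonneg _) (hoff i j hij)
  linarith [two_mul_sum_mul_one_sub_eq A x hA]

end SymmetricForm

section Gram

variable {n : ℕ} (v : Fin n → Fin n → ℤ)

lemma dotZ_comm (a b : Fin n → ℤ) : dotZ a b = dotZ b a :=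
  dotProduct_comm a b

lemma dotZ_sum_smul_sum_smul (a b : Fin n → ℤ) :
    dotZ (∑ i, a i • v i) (∑ j, b j • v j) = ∑ i, ∑ j, a i * b j * dotZ (v i) (v j) := by
  change (∑ i, a i • v i) ⬝ᵥ (∑ j, b j • v j) = _
  simp_rw [sum_dotProduct, dotProduct_sum, smul_dotProduct, dotProduct_smul, smul_eq_mul]
  exact sum_congr rfl fun i _ => sum_congr rfl fun j _ => by rw [dotZ, dotProduct]; ring

lemma NonAcute.sum_dotZ_nonneg (hna : NonAcute v) (i : Fin n) :
    0 ≤ ∑ j, dotZ (v i) (v j) := by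
  rw [← add_sum_erase _ _ (mem_univ i)]
  simp only [dotZ_comm (v i)]
  linarith [hna.2.2 i]

end Gram

theorem stmt_16 {n : ℕ} (v : Fin n → Fin n → ℤ) (hna : NonAcute v)
    (x : Fin n → ℤ) :
    dotZ (∑ i, x i • v i) ((∑ i, v i) - ∑ i, x i • v i) ≤ 0 := by
  have hWu : (∑ i, v i) - ∑ i, x i • v i = ∑ j, (1 - x j) • v j := by
    rw [← sum_sub_distrib]
    exact sum_congr rfl fun j _ => by module
  rw [hWu, dotZ_sum_smul_sum_smul]
  exact sum_mul_one_sub_nonpos _ x (fun i j => dotZ_comm _ _) hna.2.1 hna.sum_dotZ_nonneg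
end

section
/- Let k_1,…,k_n be integers, let W = Σ_{i=1}^n k_i e_i ∈ ℤ^n, and set R_o = {i : k_i is odd}. Suppose Σ_{i=1}^n k_i² > 4n − 3|R_o|. Then for every x ∈ ℤ^n satisfying |2x_i − k_i| ≤ 2 for all i (i.e., every lattice point of a unit cube whose closed solid cube contains W/2), one has ⟨x, W − x⟩ > 0. -/
open Finset

/- With `d = 2x - k` the vector from `W` to `2x`, one has `4⟨x, W - x⟩ = |W|² - |d|²`. Each
coordinate of `d` has absolute value at most `2`, and at most `1` where `k_i` is odd since `d_i`
and `k_i` have the same parity; hence `|d|² ≤ 4n - 3|R_o| < |W|²`. -/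

theorem four_mul_dotZ_sub_self {n : ℕ} (x k : Fin n → ℤ) :
    4 * dotZ x (k - x) = ∑ i, (k i ^ 2 - (2 * x i - k i) ^ 2) := by
  rw [dotZ, mul_sum]
  exact sum_congr rfl fun i _ => by simp only [Pi.sub_apply]; ring

theorem sq_two_mul_sub_le {a b : ℤ} (h : |2 * a - b| ≤ 2) :
    (2 * a - b) ^ 2 ≤ 4 - 3 * if Odd b then 1 else 0 := by
  rw [abs_le] at h
  split_ifs with hb
  · obtain ⟨m, rfl⟩ := hb
    have hunit : 2 * a - (2 * m + 1) = 1 ∨ 2 * a - (2 * m + 1) = -1 := by omega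
    rcases hunit with hd | hd <;> rw [hd] <;> norm_num
  · nlinarith

theorem stmt_17 {n : ℕ} (k : Fin n → ℤ)
    (h : ∑ i, (k i) ^ 2 >
      4 * (n : ℤ) - 3 * ((univ.filter fun i => Odd (k i)).card : ℤ))
    (x : Fin n → ℤ) (hx : ∀ i, |2 * x i - k i| ≤ 2) :
    0 < dotZ x (k - x) := by
  have hd : ∑ i, (2 * x i - k i) ^ 2
      ≤ 4 * (n : ℤ) - 3 * ((univ.filter fun i => Odd (k i)).card : ℤ) :=
    calc ∑ i, (2 * x i - k i) ^ 2
        ≤ ∑ i, (4 - 3 * if Odd (k i) then (1 : ℤ) else 0) :=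
          sum_le_sum fun i _ => sq_two_mul_sub_le (hx i)
      _ = _ := by rw [sum_sub_distrib, ← mul_sum, natCast_card_filter]; simp [mul_comm]
  have hexpand := four_mul_dotZ_sub_self x k
  rw [sum_sub_distrib] at hexpand
  linarith
end
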